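/- arXiv:1711.04242 — 6 statements merged into one kernel-verified Lean document; each statement's English description precedes it below -/
import Mathlib

section
/- Let V be a subspace of ℝ^S for a finite set S, let B ⊆ S be a base of V, and for each e ∈ B let x_e be the standard representative vector of V with respect to B (so x_e(e) = 1 and x_e(e') = 0 for e' ∈ B, e' ≠ e). Then each x_e has minimal support in V. -/
/-!
If `y ∈ V` has support inside that of `x_e`, then `y` vanishes on `B \ {e}` like `x_e`, so
`y - y(e) • x_e` vanishes on all of `B` and is zero because restriction to a base is injective.
Thus `y` is a multiple of `x_e`, and a nonzero multiple has the same support.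
-/

/-- The support of a vector on `S`: the set of coordinates where it is nonzero. -/
def suppOf {S : Type*} (x : S → ℝ) : Set S := {e | x e ≠ 0}

/-- A nonzero vector `x` of a subspace `V` of `ℝ^S` has minimal support in `V`
if no nonzero vector of `V` has support properly contained in `suppOf x`. -/
def HasMinimalSupport {S : Type*} (V : Submodule ℝ (S → ℝ)) (x : S → ℝ) : Prop :=
  x ≠ 0 ∧ ∀ y ∈ V, y ≠ 0 → ¬ (suppOf y ⊂ suppOf x)

/-- A subset `B ⊆ S` is a base of the subspace `V ⊆ ℝ^S` if the restriction map
`V → ℝ^B`, `x ↦ x|_B`, is a (linear) isomorphism, i.e. bijective. -/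
def IsBase {S : Type*} (V : Submodule ℝ (S → ℝ)) (B : Set S) : Prop :=
  Function.Bijective (fun (x : V) => fun (e : B) => (x : S → ℝ) e)

lemma suppOf_smul {S : Type*} {c : ℝ} (hc : c ≠ 0) (x : S → ℝ) : suppOf (c • x) = suppOf x := by
  ext a
  simp [suppOf, hc]

namespace IsBase

variable {S : Type*} {V : Submodule ℝ (S → ℝ)} {B : Set S}

lemma eq_zero_of_forall_mem_eq_zero (hB : IsBase V B) {x : S → ℝ} (hxV : x ∈ V)
    (hxB : ∀ b ∈ B, x b = 0) : x = 0 := by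
  have : (⟨x, hxV⟩ : V) = 0 := hB.injective <| funext fun b => by simp [hxB b b.2]
  simpa using congrArg Subtype.val this

lemma eq_smul_of_suppOf_subset (hB : IsBase V B) {e : S} {x y : S → ℝ} (hxV : x ∈ V)
    (hyV : y ∈ V) (hxe : x e = 1) (hx0 : ∀ e' ∈ B, e' ≠ e → x e' = 0)
    (hyx : suppOf y ⊆ suppOf x) : y = y e • x := by
  have hy0 : ∀ e' ∈ B, e' ≠ e → y e' = 0 := fun e' he' hne =>
    not_not.mp fun hy => hyx hy (hx0 e' he' hne)
  have hdiff : y - y e • x = 0 := by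
    refine hB.eq_zero_of_forall_mem_eq_zero (V.sub_mem hyV (V.smul_mem _ hxV)) fun b hb => ?_
    by_cases hbe : b = e
    · simp [hbe, hxe]
    · simp [hx0 b hb hbe, hy0 b hb hbe]
  exact sub_eq_zero.mp hdiff

end IsBase

theorem standardRepresentative_hasMinimalSupport_general
    {S : Type*} (V : Submodule ℝ (S → ℝ)) (B : Set S) (hB : IsBase V B)
    (e : S) (xe : S → ℝ) (hxV : xe ∈ V) (hxe : xe e = 1)
    (hx0 : ∀ e' ∈ B, e' ≠ e → xe e' = 0) :
    HasMinimalSupport V xe := by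
  refine ⟨fun h => by simp [h] at hxe, fun y hyV hy hss => ?_⟩
  have hy_eq : y = y e • xe := hB.eq_smul_of_suppOf_subset hxV hyV hxe hx0 hss.subset
  have hye : y e ≠ 0 := fun h0 => hy (by rw [hy_eq, h0, zero_smul])
  exact hss.ne (by rw [hy_eq, suppOf_smul hye])

/-- Each standard representative vector of `V` with respect to a base `B`
(the vector `x_e ∈ V` with `x_e e = 1` and `x_e e' = 0` for `e' ∈ B`, `e' ≠ e`)
has minimal support in `V`. -/
theorem standardRepresentative_hasMinimalSupport
    {S : Type*} [Fintype S] (V : Submodule ℝ (S → ℝ)) (B : Set S) (hB : IsBase V B)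
    (e : S) (he : e ∈ B) (xe : S → ℝ) (hxV : xe ∈ V) (hxe : xe e = 1)
    (hx0 : ∀ e' ∈ B, e' ≠ e → xe e' = 0) :
    HasMinimalSupport V xe :=
  standardRepresentative_hasMinimalSupport_general V B hB e xe hxV hxe hx0
end

section
/- Let V be a subspace of ℝ^S for a finite set S. Then V is spanned by its vectors of minimal support; consequently, any vector of ℝ^S orthogonal to all minimal support vectors of V is orthogonal to every vector of V. -/
/-!
Induct on the support. A nonzero vector `v ∈ V` that is not of minimal support contains the
support of some nonzero `y ∈ V`; subtracting the multiple of `y` that cancels a coordinate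
`e ∈ supp y` leaves a vector of `V` with strictly smaller support, so `v` is a combination of
two vectors of `V` with smaller supports. Orthogonality then passes from a spanning set to
its span because `x ↦ ⟨x, y⟩` is linear.
-/

open Matrix

theorem suppOf_sub_smul_subset {S : Type*} {x y : S → ℝ} (hxy : suppOf y ⊆ suppOf x)
    (c : ℝ) : suppOf (x - c • y) ⊆ suppOf x := by
  intro f hf
  by_contra hxf
  have hyf : f ∉ suppOf y := fun h => hxf (hxy h)
  simp_all [suppOf]

theorem suppOf_sub_smul_ssubset {S : Type*} {x y : S → ℝ} (hxy : suppOf y ⊆ suppOf x)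
    {e : S} (he : y e ≠ 0) : suppOf (x - (x e / y e) • y) ⊂ suppOf x := by
  refine (Set.ssubset_iff_of_subset (suppOf_sub_smul_subset hxy _)).2 ⟨e, hxy he, ?_⟩
  simp [suppOf, div_mul_cancel₀ _ he]

theorem mem_span_minimalSupport {S : Type*} [Finite S] (V : Submodule ℝ (S → ℝ))
    {v : S → ℝ} (hv : v ∈ V) :
    v ∈ Submodule.span ℝ {x : S → ℝ | x ∈ V ∧ HasMinimalSupport V x} := by
  induction v using (InvImage.wf suppOf (wellFounded_lt (α := Set S))).induction with
  | _ v ih =>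
    by_cases hv0 : v = 0
    · exact hv0 ▸ Submodule.zero_mem _
    by_cases hmin : HasMinimalSupport V v
    · exact Submodule.subset_span ⟨hv, hmin⟩
    obtain ⟨y, hyV, hy0, hyv⟩ : ∃ y ∈ V, y ≠ 0 ∧ suppOf y ⊂ suppOf v := by
      simpa [HasMinimalSupport, hv0] using hmin
    obtain ⟨e, he⟩ : ∃ e, y e ≠ 0 := Function.ne_iff.mp hy0
    set c := v e / y e
    have hy : y ∈ Submodule.span ℝ _ := ih y hyv hyV
    have hw : v - c • y ∈ Submodule.span ℝ _ :=
      ih _ (suppOf_sub_smul_ssubset hyv.subset he) (V.sub_mem hv (V.smul_mem c hyV))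
    simpa using Submodule.add_mem _ hw (Submodule.smul_mem _ c hy)

theorem dotProduct_eq_zero_of_mem_span {R m : Type*} [CommSemiring R] [Fintype m]
    {s : Set (m → R)} {y : m → R} (h : ∀ x ∈ s, x ⬝ᵥ y = 0) {v : m → R}
    (hv : v ∈ Submodule.span R s) : v ⬝ᵥ y = 0 :=
  (Submodule.span_le (p := LinearMap.ker ((dotProductBilin R R).flip y))).2 h hv

/-- A subspace `V` of `ℝ^S` is spanned by its vectors of minimal support;
consequently, any vector orthogonal (under the dot product) to all minimal
support vectors of `V` is orthogonal to every vector of `V`. -/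
theorem span_minimalSupport_eq_and_orthogonality
    {S : Type*} [Fintype S] (V : Submodule ℝ (S → ℝ)) :
    Submodule.span ℝ {x : S → ℝ | x ∈ V ∧ HasMinimalSupport V x} = V ∧
    ∀ y : S → ℝ, (∀ x : S → ℝ, x ∈ V → HasMinimalSupport V x → ∑ e, x e * y e = 0) →
      ∀ v ∈ V, ∑ e, v e * y e = 0 := by
  have hspan : Submodule.span ℝ {x : S → ℝ | x ∈ V ∧ HasMinimalSupport V x} = V :=
    le_antisymm (Submodule.span_le.2 fun _ hx => hx.1) fun _ hv => mem_span_minimalSupport V hv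
  exact ⟨hspan, fun y hy v hv =>
    dotProduct_eq_zero_of_mem_span (fun x hx => hy x hx.1 hx.2) (hspan.symm ▸ hv)⟩
end

section
/- Let V be a regular (completely unimodular) subspace of ℝ^S for a finite set S, let B ⊆ S be a base of V, and let Q_B be the standard representative matrix of V with respect to B, i.e. the matrix whose rows are the standard representative vectors (x_e)_{e∈B} and whose columns are indexed by S. Then Q_B is totally unimodular: every square submatrix of Q_B has determinant 0, 1, or −1. -/
/-- A subspace `V` of `ℝ^S` is regular (completely unimodular) if every minimal
support vector of `V` is a scalar multiple of a vector with values in `{0, 1, -1}`. -/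
def IsRegularSubspace {S : Type*} (V : Submodule ℝ (S → ℝ)) : Prop :=
  ∀ x ∈ V, HasMinimalSupport V x →
    ∃ (c : ℝ) (u : S → ℝ), (∀ e, u e = 0 ∨ u e = 1 ∨ u e = -1) ∧ x = c • u

/-!
A square submatrix of `Q` with rows `f` and columns `g` has the same determinant as the `B × B`
matrix `M` obtained from `Q` by replacing, for each `i`, the unit column of row `f i` by column
`g i`. If `M` is invertible, its columns index a new base of `V`, whose standard representative
vectors are the rows of `M⁻¹ * Q`. Standard representative vectors have minimal support, so by
regularity both `Q` and `M⁻¹ * Q` have entries in `{0, 1, -1}`. Hence `M` and `M⁻¹` are integral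
and `det M = ±1`.
-/

open Function Matrix

theorem SignType.range_cast_subset_range_intCast {α : Type*} [AddGroupWithOne α] :
    Set.range (SignType.cast : SignType → α) ⊆ Set.range ((↑) : ℤ → α) :=
  fun _ ⟨t, ht⟩ => ⟨t, (SignType.intCast_cast t).trans ht⟩

theorem Submodule.vecMul_mem {R S ι : Type*} [Semiring R] [Fintype ι] {V : Submodule R (S → R)}
    {P : Matrix ι S R} (hPV : ∀ i, P i ∈ V) (v : ι → R) : v ᵥ* P ∈ V := by
  rw [vecMul_eq_sum]
  exact V.sum_mem fun i _ => V.smul_mem _ (hPV i)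

namespace Matrix

variable {l m n R : Type*} [CommRing R]

theorem det_submatrix_extend_eq_det_submatrix [Fintype l] [DecidableEq l] [Fintype m]
    [DecidableEq m] {A : Matrix m n R} {ι : m → n} (hι : A.submatrix id ι = 1)
    {f : l → m} (hf : f.Injective) (g : l → n) :
    (A.submatrix id (extend f g ι)).det = (A.submatrix f g).det := by
  classical
  let e : l ⊕ ↥(Set.range f)ᶜ ≃ m :=
    ((Equiv.ofInjective f hf).sumCongr (Equiv.refl _)).trans (Equiv.Set.sumCompl _)
  have hι' (i j : m) : A i (ι j) = (1 : Matrix m m R) i j := congrFun (congrFun hι i) j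
  have hblocks : (A.submatrix id (extend f g ι)).submatrix e e =
      fromBlocks (A.submatrix f g) 0 (of fun (c : ↥(Set.range f)ᶜ) j => A c (g j)) 1 := by
    have hext (c : ↥(Set.range f)ᶜ) : extend f g ι c = ι c := extend_apply' _ _ _ c.2
    ext (i | c) (j | c')
    · simp [e, hf.extend_apply]
    · simpa [e, hext, hι'] using one_apply_ne fun h => c'.2 ⟨i, h⟩
    · simp [e, hf.extend_apply]
    · simp [e, hext, hι', one_apply, Subtype.ext_iff]
  rw [← det_submatrix_equiv_self e, hblocks, det_fromBlocks_zero₁₂, det_one, mul_one]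

theorem isTotallyUnimodular_of_det_submatrix_id [Fintype m] [DecidableEq m] {A : Matrix m n R}
    {ι : m → n} (hι : A.submatrix id ι = 1)
    (hA : ∀ φ : m → n, (A.submatrix id φ).det ∈ Set.range SignType.cast) :
    A.IsTotallyUnimodular := fun _ _ g hf _ =>
  det_submatrix_extend_eq_det_submatrix hι hf g ▸ hA _

theorem det_mem_range_intCast [Fintype m] [DecidableEq m] {M : Matrix m m R}
    (hM : ∀ i j, M i j ∈ Set.range ((↑) : ℤ → R)) : M.det ∈ Set.range ((↑) : ℤ → R) := by
  choose M₀ hM₀ using hM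
  have hM_eq : M = (Int.castRingHom R).mapMatrix (of M₀) := by
    ext i j
    exact (hM₀ i j).symm
  exact ⟨(of M₀).det, by rw [hM_eq, ← RingHom.map_det, Int.coe_castRingHom]⟩

theorem det_mem_range_signType_of_mul_eq_one [CharZero R] [Fintype m] [DecidableEq m]
    {M N : Matrix m m R} (hM : ∀ i j, M i j ∈ Set.range ((↑) : ℤ → R))
    (hN : ∀ i j, N i j ∈ Set.range ((↑) : ℤ → R)) (hMN : M * N = 1) :
    M.det ∈ Set.range SignType.cast := by
  obtain ⟨a, ha⟩ := det_mem_range_intCast hM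
  obtain ⟨b, hb⟩ := det_mem_range_intCast hN
  have hab : a * b = 1 := by
    exact_mod_cast (by rw [Int.cast_mul, ha, hb, ← det_mul, hMN, det_one] : ((a * b : ℤ) : R) = 1)
  rcases Int.isUnit_iff.mp (.of_mul_eq_one b hab) with rfl | rfl
  · exact ⟨1, by simp [← ha]⟩
  · exact ⟨-1, by simp [← ha]⟩

end Matrix

section RegularSubspace

variable {S ι : Type*} {V : Submodule ℝ (S → ℝ)}

theorem hasMinimalSupport_of_comp_eq_single [DecidableEq ι] {T : ι → S}
    (hT : ∀ x ∈ V, x ∘ T = 0 → x = 0) {y : S → ℝ} (hy : y ∈ V) {j : ι}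
    (hyT : y ∘ T = Pi.single j 1) : HasMinimalSupport V y := by
  have hyT_apply (i : ι) : y (T i) = (Pi.single j 1 : ι → ℝ) i := congrFun hyT i
  refine ⟨fun h => by simpa [h] using hyT_apply j, fun z hz hz0 hzy => ?_⟩
  have hzT (i : ι) (hi : i ≠ j) : z (T i) = 0 := by
    by_contra h
    exact hzy.subset h (by simp [hyT_apply, hi])
  have hzj : z (T j) ≠ 0 := by
    refine fun h => hz0 (hT z hz (funext fun i => ?_))
    rcases eq_or_ne i j with rfl | hi
    exacts [h, hzT i hi]
  have hyz : y = (z (T j))⁻¹ • z := by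
    refine sub_eq_zero.mp (hT _ (V.sub_mem hy (V.smul_mem _ hz)) (funext fun i => ?_))
    rcases eq_or_ne i j with rfl | hi
    · simp [hyT_apply, hzj]
    · simp [hyT_apply, hzT i hi, hi]
  exact hzy.not_subset fun s hs => by simp_all [suppOf]

theorem IsRegularSubspace.apply_mem_range_signType (hV : IsRegularSubspace V) {y : S → ℝ}
    (hy : y ∈ V) (hmin : HasMinimalSupport V y) {s₀ : S} (hys₀ : y s₀ = 1) (s : S) :
    y s ∈ Set.range SignType.cast := by
  obtain ⟨c, u, hu, rfl⟩ := hV y hy hmin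
  have hu_sign (e : S) : u e ∈ Set.range SignType.cast := by
    rcases hu e with h | h | h
    exacts [⟨0, h.symm⟩, ⟨1, h.symm⟩, ⟨-1, by simp [h]⟩]
  obtain ⟨t₀, ht₀⟩ := hu_sign s₀
  obtain ⟨t, ht⟩ := hu_sign s
  have hct₀ : c * t₀ = 1 := by simpa [ht₀] using hys₀
  have ht₀_sq : (t₀ * t₀ : ℝ) = 1 := by
    rcases t₀ with _ | _ | _
    · simp at hct₀
    all_goals simp
  have hc : c = t₀ := by
    calc c = c * t₀ * t₀ := by rw [mul_assoc, ht₀_sq, mul_one]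
      _ = t₀ := by rw [hct₀, one_mul]
  exact ⟨t₀ * t, by simp [hc, ht₀, ht]⟩

theorem IsRegularSubspace.apply_mem_range_signType_of_submatrix_eq_one [DecidableEq ι]
    (hV : IsRegularSubspace V) {T : ι → S} (hT : ∀ x ∈ V, x ∘ T = 0 → x = 0)
    {P : Matrix ι S ℝ} (hPV : ∀ i, P i ∈ V) (hPT : P.submatrix id T = 1) (i : ι) (s : S) :
    P i s ∈ Set.range SignType.cast := by
  have hrow : P i ∘ T = Pi.single i 1 := funext fun j => by
    simpa [one_eq_pi_single] using congrFun (congrFun hPT i) j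
  exact hV.apply_mem_range_signType (hPV i)
    (hasMinimalSupport_of_comp_eq_single hT (hPV i) hrow) (by simpa using congrFun hrow i) s

end RegularSubspace

section Base

variable {S : Type*} {V : Submodule ℝ (S → ℝ)} {B : Set S}

theorem IsBase.eq_zero_of_comp_eq_zero (hB : IsBase V B) :
    ∀ x ∈ V, x ∘ ((↑) : B → S) = 0 → x = 0 := by
  intro x hx hxB
  have h : (⟨x, hx⟩ : V) = 0 := hB.injective hxB
  simpa using congrArg Subtype.val h

theorem IsBase.eq_vecMul [Fintype B] [DecidableEq B] (hB : IsBase V B) {Q : Matrix B S ℝ}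
    (hQV : ∀ e, Q e ∈ V) (hQ : Q.submatrix id ((↑) : B → S) = 1) {x : S → ℝ} (hx : x ∈ V) :
    x = (x ∘ ((↑) : B → S)) ᵥ* Q := by
  refine sub_eq_zero.mp
    (hB.eq_zero_of_comp_eq_zero _ (V.sub_mem hx (Submodule.vecMul_mem hQV _)) ?_)
  change x ∘ ((↑) : B → S) - (x ∘ ((↑) : B → S)) ᵥ* Q.submatrix id ((↑) : B → S) = 0
  rw [hQ, vecMul_one, sub_self]

theorem IsRegularSubspace.det_submatrix_mem_range_signType [Fintype B] [DecidableEq B]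
    (hV : IsRegularSubspace V) (hB : IsBase V B) {Q : Matrix B S ℝ} (hQV : ∀ e, Q e ∈ V)
    (hQ : Q.submatrix id ((↑) : B → S) = 1) (φ : B → S) :
    (Q.submatrix id φ).det ∈ Set.range SignType.cast := by
  set M := Q.submatrix id φ
  by_cases hM : M.det = 0
  · exact ⟨0, by simp [hM]⟩
  have hφ : ∀ x ∈ V, x ∘ φ = 0 → x = 0 := by
    intro x hx hxφ
    have hxM : (x ∘ ((↑) : B → S)) ᵥ* M = 0 :=
      calc (x ∘ ((↑) : B → S)) ᵥ* M = ((x ∘ ((↑) : B → S)) ᵥ* Q) ∘ φ := rfl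
        _ = 0 := by rw [← hB.eq_vecMul hQV hQ hx, hxφ]
    exact hB.eq_zero_of_comp_eq_zero x hx (eq_zero_of_vecMul_eq_zero hM hxM)
  have hMu : IsUnit M.det := isUnit_iff_ne_zero.mpr hM
  have hNV (b : B) : (M⁻¹ * Q) b ∈ V := Submodule.vecMul_mem hQV (M⁻¹ b)
  have hNφ : (M⁻¹ * Q).submatrix id φ = 1 := by
    rw [submatrix_mul _ _ _ id _ bijective_id, submatrix_id_id, nonsing_inv_mul _ hMu]
  have hNB : (M⁻¹ * Q).submatrix id ((↑) : B → S) = M⁻¹ := by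
    rw [submatrix_mul _ _ _ id _ bijective_id, submatrix_id_id, hQ, mul_one]
  refine det_mem_range_signType_of_mul_eq_one (N := M⁻¹) (fun b c => ?_) (fun b c => ?_)
    (mul_nonsing_inv _ hMu) <;> apply SignType.range_cast_subset_range_intCast
  · exact hV.apply_mem_range_signType_of_submatrix_eq_one hB.eq_zero_of_comp_eq_zero hQV hQ
      b (φ c)
  · rw [← hNB]
    exact hV.apply_mem_range_signType_of_submatrix_eq_one hφ hNV hNφ b c

end Base

/-- If `V` is regular, then the standard representative matrix `Q_B` of `V` with
respect to a base `B` (rows indexed by `B`, columns by `S`, the row of `e ∈ B`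
being the standard representative vector `x_e`) is totally unimodular: every
square submatrix has determinant `0`, `1` or `-1`. -/
theorem standardRepresentativeMatrix_totallyUnimodular_of_regular
    {S : Type*} [Fintype S] (V : Submodule ℝ (S → ℝ)) (hV : IsRegularSubspace V)
    (B : Set S) (hB : IsBase V B) (Q : Matrix B S ℝ)
    (hQV : ∀ e : B, Q e ∈ V)
    (hQdiag : ∀ e : B, Q e (e : S) = 1)
    (hQoff : ∀ e e' : B, e' ≠ e → Q e (e' : S) = 0) :
    Q.IsTotallyUnimodular := by
  classical
  have hQ : Q.submatrix id ((↑) : B → S) = 1 := by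
    ext e e'
    rcases eq_or_ne e' e with rfl | h
    · simp [hQdiag]
    · simp [hQoff e e' h, one_apply_ne h.symm]
  exact isTotallyUnimodular_of_det_submatrix_id hQ
    (hV.det_submatrix_mem_range_signType hB hQV hQ)
end

section
/- Let V be a regular (completely unimodular) subspace of ℝ^S for a finite set S. Then the orthogonal complement V^⊥ (with respect to the dot product on ℝ^S) is also regular. -/
/-- The orthogonal complement of a subspace `V` of `ℝ^S` with respect to the
dot product `⟨x,y⟩ = ∑ e, x e * y e`. -/
def perpSub {S : Type*} [Fintype S] (V : Submodule ℝ (S → ℝ)) : Submodule ℝ (S → ℝ) where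
  carrier := {y | ∀ x ∈ V, ∑ e, x e * y e = 0}
  zero_mem' := by intro x _; simp
  add_mem' := by
    intro a b ha hb x hx
    simp only [Set.mem_setOf_eq] at ha hb
    simp [Pi.add_apply, mul_add, Finset.sum_add_distrib, ha x hx, hb x hx]
  smul_mem' := by
    intro c a ha x hx
    simp only [Set.mem_setOf_eq] at ha
    simp [Pi.smul_apply, smul_eq_mul, mul_left_comm, ← Finset.mul_sum, ha x hx]

section

variable {S : Type*}

theorem suppOf_sub_smul_subset_s5 (a b : S → ℝ) (c : ℝ) :
    suppOf (a - c • b) ⊆ suppOf a ∪ suppOf b := by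
  intro g hg
  contrapose! hg
  simp_all [suppOf]

theorem perpSub_eq_orthogonal [Fintype S] (V : Submodule ℝ (S → ℝ)) :
    perpSub V = LinearMap.BilinForm.orthogonal (dotProductBilin ℝ ℝ) V :=
  rfl

theorem perpSub_perpSub [Fintype S] (V : Submodule ℝ (S → ℝ)) : perpSub (perpSub V) = V := by
  rw [perpSub_eq_orthogonal, perpSub_eq_orthogonal]
  exact LinearMap.BilinForm.orthogonal_orthogonal
    ⟨fun x hx => dotProduct_self_eq_zero.1 (hx x), fun y hy => dotProduct_self_eq_zero.1 (hy y)⟩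
    (fun x y h => by simpa [dotProduct_comm] using h) V

theorem HasMinimalSupport.eq_smul_of_suppOf_subset {W : Submodule ℝ (S → ℝ)} {x y : S → ℝ}
    (hmin : HasMinimalSupport W x) (hx : x ∈ W) (hy : y ∈ W) (hyx : suppOf y ⊆ suppOf x) :
    ∃ l : ℝ, y = l • x := by
  obtain ⟨e, he⟩ : ∃ e, x e ≠ 0 := Function.ne_iff.1 hmin.1
  refine ⟨y e / x e, sub_eq_zero.1 (not_not.1 fun hz => hmin.2 _ ?_ hz ?_)⟩
  · exact sub_mem hy (Submodule.smul_mem _ _ hx)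
  · refine (Set.ssubset_iff_of_subset ?_).2 ⟨e, he, by simp [suppOf, div_mul_cancel₀ _ he]⟩
    exact (suppOf_sub_smul_subset_s5 _ _ _).trans (Set.union_subset hyx subset_rfl)

theorem exists_hasMinimalSupport_suppOf_subset [Finite S] {W : Submodule ℝ (S → ℝ)}
    {v : S → ℝ} (hv : v ∈ W) {e : S} (he : v e ≠ 0) :
    ∃ u ∈ W, HasMinimalSupport W u ∧ u e ≠ 0 ∧ suppOf u ⊆ suppOf v := by
  induction hn : (suppOf v).ncard using Nat.strong_induction_on generalizing v with
  | _ n ih =>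
  by_cases hmin : HasMinimalSupport W v
  · exact ⟨v, hv, hmin, he, subset_rfl⟩
  obtain ⟨z, hzW, hze, hzv⟩ : ∃ z ∈ W, z e ≠ 0 ∧ suppOf z ⊂ suppOf v := by
    have hv0 : v ≠ 0 := fun h => he (by simp [h])
    simp only [HasMinimalSupport, hv0, ne_eq, not_false_eq_true, true_and, not_forall,
      not_not] at hmin
    obtain ⟨y, hyW, hy0, hyv⟩ := hmin
    by_cases hye : y e = 0
    · -- Subtracting a multiple of `y` kills one more coordinate without touching `e`.
      obtain ⟨g, hg⟩ : ∃ g, y g ≠ 0 := Function.ne_iff.1 hy0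
      refine ⟨v - (v g / y g) • y, sub_mem hv (Submodule.smul_mem _ _ hyW),
        by simpa [hye] using he, (Set.ssubset_iff_of_subset ?_).2 ⟨g, hyv.subset hg, ?_⟩⟩
      · exact (suppOf_sub_smul_subset_s5 _ _ _).trans (Set.union_subset subset_rfl hyv.subset)
      · simp [suppOf, div_mul_cancel₀ _ hg]
    · exact ⟨y, hyW, hye, hyv⟩
  obtain ⟨u, huW, hu, hue, huz⟩ := ih _ (hn ▸ Set.ncard_lt_ncard hzv) hzW hze rfl
  exact ⟨u, huW, hu, hue, huz.trans hzv.subset⟩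

theorem exists_smul_sign_iff_abs_eq (x : S → ℝ) :
    (∃ (c : ℝ) (u : S → ℝ), (∀ e, u e = 0 ∨ u e = 1 ∨ u e = -1) ∧ x = c • u) ↔
      ∀ e f, x e ≠ 0 → x f ≠ 0 → |x e| = |x f| := by
  constructor
  · rintro ⟨c, u, hu, rfl⟩
    have habs : ∀ g, c * u g ≠ 0 → |c * u g| = |c| := by
      intro g hg
      rcases hu g with h | h | h <;> simp_all
    intro e f he hf
    simp only [Pi.smul_apply, smul_eq_mul] at he hf ⊢
    rw [habs e he, habs f hf]
  · intro hx
    by_cases hx0 : x = 0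
    · exact ⟨0, 0, fun _ => Or.inl rfl, by simp [hx0]⟩
    obtain ⟨e₀, he₀⟩ : ∃ e, x e ≠ 0 := Function.ne_iff.1 hx0
    refine ⟨|x e₀|, fun g => SignType.sign (x g), fun g => ?_, funext fun g => ?_⟩
    · rcases lt_trichotomy (x g) 0 with h | h | h <;> simp [h]
    · by_cases hg : x g = 0
      · simp [hg]
      · simp [← hx g e₀ hg he₀]

theorem isRegularSubspace_iff (V : Submodule ℝ (S → ℝ)) :
    IsRegularSubspace V ↔
      ∀ x ∈ V, HasMinimalSupport V x → ∀ e f, x e ≠ 0 → x f ≠ 0 → |x e| = |x f| := by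
  simp only [IsRegularSubspace, exists_smul_sign_iff_abs_eq]

variable [Fintype S] {V : Submodule ℝ (S → ℝ)} {x : S → ℝ}

theorem exists_mem_eqOn_suppOf (hx : x ∈ perpSub V) (hmin : HasMinimalSupport (perpSub V) x)
    {w : S → ℝ} (hwx : ∑ e, w e * x e = 0) :
    ∃ v ∈ V, Set.EqOn v w (suppOf x) := by
  classical
  set Z : Submodule ℝ (S → ℝ) := Submodule.pi (suppOf x) fun _ => ⊥
  have hw : w ∈ V ⊔ Z := by
    rw [← perpSub_perpSub (V ⊔ Z)]
    intro y hy
    have hyV : y ∈ perpSub V := fun v hv => hy v (Submodule.mem_sup_left hv)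
    have hyx : suppOf y ⊆ suppOf x := by
      intro g hg
      by_contra hgx
      have hsingle : (Pi.single g 1 : S → ℝ) ∈ Z := by
        simp only [Z, Submodule.mem_pi, Submodule.mem_bot]
        intro g' hg'
        exact Pi.single_eq_of_ne (by rintro rfl; exact hgx hg') 1
      exact hg (by simpa [Pi.single_apply] using hy _ (Submodule.mem_sup_right hsingle))
    obtain ⟨l, rfl⟩ := hmin.eq_smul_of_suppOf_subset hx hyV hyx
    simp only [Pi.smul_apply, smul_eq_mul, mul_assoc, mul_comm (x _) (w _), ← Finset.mul_sum, hwx,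
      mul_zero]
  obtain ⟨v, hv, z, hz, rfl⟩ := Submodule.mem_sup.1 hw
  refine ⟨v, hv, fun e he => ?_⟩
  have hze : z e = 0 := Submodule.mem_bot ℝ |>.1 (Submodule.mem_pi.1 hz e he)
  simp [hze]

theorem exists_hasMinimalSupport_mul_add_mul_eq_zero (hx : x ∈ perpSub V)
    (hmin : HasMinimalSupport (perpSub V) x) {e f : S} (hef : e ≠ f) (he : x e ≠ 0)
    (hf : x f ≠ 0) :
    ∃ u ∈ V, HasMinimalSupport V u ∧ u e ≠ 0 ∧ u e * x e + u f * x f = 0 := by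
  classical
  have hwx : ∑ g, (Pi.single e (x f) - Pi.single f (x e) : S → ℝ) g * x g = 0 := by
    rw [Fintype.sum_eq_add e f hef fun g hg => by simp [hg.1, hg.2]]
    simp [hef, hef.symm, mul_comm]
  obtain ⟨v, hvV, hv⟩ := exists_mem_eqOn_suppOf hx hmin hwx
  obtain ⟨u, huV, humin, hue, huv⟩ :=
    exists_hasMinimalSupport_suppOf_subset hvV (e := e) (by simp [hv he, hef.symm, hf])
  refine ⟨u, huV, humin, hue, ?_⟩
  rw [← Fintype.sum_eq_add (f := fun g => u g * x g) e f hef, hx u huV]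
  rintro g ⟨hge, hgf⟩
  by_cases hxg : x g = 0
  · simp [hxg]
  · have hvg : v g = 0 := by simp [hv hxg, hge, hgf]
    have hug : u g = 0 := not_not.1 fun hug => huv hug hvg
    simp [hug]

end

/-- If `V ⊆ ℝ^S` is regular (completely unimodular), then so is its orthogonal
complement `V^⊥`. -/
theorem perp_isRegular_of_isRegular
    {S : Type*} [Fintype S] (V : Submodule ℝ (S → ℝ)) (hV : IsRegularSubspace V) :
    IsRegularSubspace (perpSub V) := by
  rw [isRegularSubspace_iff] at hV ⊢
  intro x hx hmin e f he hf
  rcases eq_or_ne e f with rfl | hef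
  · rfl
  obtain ⟨u, huV, humin, hue, hux⟩ :=
    exists_hasMinimalSupport_mul_add_mul_eq_zero hx hmin hef he hf
  have huf : u f ≠ 0 := fun h => mul_ne_zero hue he (by simpa [h] using hux)
  have habs : |u e| * |x e| = |u f| * |x f| := by
    rw [← abs_mul, ← abs_mul, eq_neg_of_add_eq_zero_left hux, abs_neg]
  rwa [hV u huV humin e f hue huf, mul_right_inj' (abs_ne_zero.2 huf)] at habs
end

section
/- Let V be a subspace of ℝ^S for a finite set S, and let x ∈ V have minimal support in V. Then there exists a base B of V such that B ∩ supp(x) consists of exactly one element. -/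
/-!
Restrict to coordinates `T := (S ∖ supp x) ∪ {e}` for some `e ∈ supp x`, and take `B ⊆ T`
maximal such that restriction `V → K^B` is onto. If `v ∈ V` vanishes on `B` but not at some
`s ∈ T`, adding a multiple of `v` corrects any coordinate at `s`, so `insert s B` would still be
onto; hence `v` vanishes on all of `T`. Its support then lies in `supp x ∖ {e}`, so `v = 0` by
minimality, and restriction to `B` is a bijection. Finally `e ∈ B`, since otherwise the nonzero
`x` would vanish on `B`.
-/

open Function Set

section Restriction

variable {K S : Type*} [Field K] (V : Submodule K (S → K))

theorem injective_domRestrict_of_forall_eq_zero {B : Set S}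
    (h : ∀ v ∈ V, (∀ i ∈ B, v i = 0) → v = 0) :
    Injective fun v : V => B.domRestrict (v : S → K) := by
  intro y z hyz
  have hB : ∀ i ∈ B, ((y : S → K) - z) i = 0 := fun i hi => by
    simpa [sub_eq_zero] using congrFun hyz ⟨i, hi⟩
  exact Subtype.ext (sub_eq_zero.mp (h _ (sub_mem y.2 z.2) hB))

theorem surjective_domRestrict_insert {B : Set S}
    (hB : Surjective fun v : V => B.domRestrict (v : S → K))
    {v : S → K} (hv : v ∈ V) (hvB : ∀ i ∈ B, v i = 0) {s : S} (hs : v s ≠ 0) :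
    Surjective fun w : V => (insert s B).domRestrict (w : S → K) := by
  intro g
  obtain ⟨y, hy⟩ := hB fun i => g ⟨i, mem_insert_of_mem s i.2⟩
  set c := (g ⟨s, mem_insert s B⟩ - (y : S → K) s) / v s
  refine ⟨⟨y + c • v, add_mem y.2 (V.smul_mem c hv)⟩, funext fun ⟨i, hi⟩ => ?_⟩
  rcases hi with rfl | hiB
  · simp [c, field]
  · simpa [hvB i hiB] using congrFun hy ⟨i, hiB⟩

theorem exists_subset_surjective_domRestrict [Finite S] (T : Set S) :
    ∃ B ⊆ T, (Surjective fun v : V => B.domRestrict (v : S → K)) ∧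
      ∀ v ∈ V, (∀ i ∈ B, v i = 0) → ∀ i ∈ T, v i = 0 := by
  let P : Set (Set S) := {B | B ⊆ T ∧ Surjective fun v : V => B.domRestrict (v : S → K)}
  have hP : (∅ : Set S) ∈ P := ⟨empty_subset T, fun _ => ⟨0, funext fun i => i.2.elim⟩⟩
  obtain ⟨B, ⟨hBT, hB⟩, hmax⟩ := P.toFinite.exists_maximal ⟨∅, hP⟩
  refine ⟨B, hBT, hB, fun v hv hvB s hsT => ?_⟩
  by_contra hs
  have hsB : s ∉ B := fun h => hs (hvB s h)
  have hins : insert s B ∈ P :=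
    ⟨insert_subset hsT hBT, surjective_domRestrict_insert V hB hv hvB hs⟩
  exact hsB (hmax hins (subset_insert s B) (mem_insert s B))

end Restriction

/-- If `x ∈ V` has minimal support in `V`, then there is a base `B` of `V`
that intersects the support of `x` in exactly one element. -/
theorem exists_base_inter_support_singleton
    {S : Type*} [Fintype S] (V : Submodule ℝ (S → ℝ)) (x : S → ℝ)
    (hx : x ∈ V) (hmin : HasMinimalSupport V x) :
    ∃ B : Set S, IsBase V B ∧ ∃ e : S, B ∩ suppOf x = {e} := by
  obtain ⟨hx0, hmin⟩ := hmin
  obtain ⟨e, he⟩ : ∃ e, x e ≠ 0 := Function.ne_iff.mp hx0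
  obtain ⟨B, hBT, hsurj, hvan⟩ :=
    exists_subset_surjective_domRestrict V (insert e (suppOf x)ᶜ)
  have hinj : ∀ v ∈ V, (∀ i ∈ B, v i = 0) → v = 0 := by
    intro v hv hvB
    by_contra hv0
    have hvT := hvan v hv hvB
    refine hmin v hv hv0 ⟨fun s hs => ?_, fun hsub => hsub he (hvT e (mem_insert e _))⟩
    by_contra hxs
    exact hs (hvT s (mem_insert_of_mem e hxs))
  have heB : e ∈ B := by
    by_contra heB
    refine hx0 (hinj x hx fun i hi => ?_)
    have hie : i ≠ e := fun h => heB (h ▸ hi)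
    simpa [suppOf] using (hBT hi).resolve_left hie
  refine ⟨B, ⟨injective_domRestrict_of_forall_eq_zero V hinj, hsurj⟩, e, ?_⟩
  ext i
  refine ⟨fun ⟨hiB, hix⟩ => (hBT hiB).resolve_right (not_not_intro hix), ?_⟩
  rintro rfl
  exact ⟨heB, he⟩
end

section
/- Let V be a subspace of ℝ^S for a finite set S and let B ⊆ S. Then B is a base of V if and only if S \ B is a base of V^⊥. (This expresses that the matroid associated with V^⊥ is the dual of the matroid associated with V: complements of bases of one are bases of the other.) -/
/-!
`B` is a base of `V` exactly when `V` is a complement of the coordinate subspace of vectors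
vanishing on `B`, the kernel of restriction to `B`. Orthogonal complementation (via the
Euclidean inner product, which is the dot product) reverses the lattice of subspaces, so it
preserves complementarity, and it sends the vectors vanishing on `B` to those vanishing on
`S \ B`.
-/

theorem LinearMap.bijective_domRestrict_iff_isCompl {R M N : Type*} [Ring R] [AddCommGroup M]
    [AddCommGroup N] [Module R M] [Module R N] {f : M →ₗ[R] N} (hf : Function.Surjective f)
    (p : Submodule R M) : Function.Bijective (f.domRestrict p) ↔ IsCompl p (ker f) := by
  have hsurj : Function.Surjective (f.domRestrict p) ↔ p ⊔ ker f = ⊤ := by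
    rw [← range_eq_top, range_domRestrict, ← Submodule.comap_map_eq,
      ← (Submodule.comap_injective_of_surjective hf).eq_iff, Submodule.comap_top]
  rw [Function.Bijective, injective_domRestrict_iff, hsurj, ← codisjoint_iff, isCompl_iff]

theorem IsCompl.orthogonal {𝕜 E : Type*} [RCLike 𝕜] [NormedAddCommGroup E]
    [InnerProductSpace 𝕜 E] [FiniteDimensional 𝕜 E] {U W : Submodule 𝕜 E} (h : IsCompl U W) :
    IsCompl Uᗮ Wᗮ := by
  constructor
  · rw [disjoint_iff, Submodule.inf_orthogonal, h.sup_eq_top, Submodule.top_orthogonal_eq_bot]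
  · rw [codisjoint_iff, ← Submodule.orthogonal_eq_bot_iff, ← Submodule.inf_orthogonal,
      Submodule.orthogonal_orthogonal, Submodule.orthogonal_orthogonal, h.inf_eq_bot]

section

variable {S : Type*}

theorem isBase_iff_isCompl_ker (V : Submodule ℝ (S → ℝ)) (B : Set S) :
    IsBase V B ↔ IsCompl V (LinearMap.ker (LinearMap.funLeft ℝ ℝ ((↑) : B → S))) :=
  LinearMap.bijective_domRestrict_iff_isCompl (f := LinearMap.funLeft ℝ ℝ ((↑) : B → S))
    (LinearMap.funLeft_surjective_of_injective _ _ _ Subtype.val_injective) V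

theorem mem_ker_funLeft_val {B : Set S} {x : S → ℝ} :
    x ∈ LinearMap.ker (LinearMap.funLeft ℝ ℝ ((↑) : B → S)) ↔ ∀ e ∈ B, x e = 0 := by
  simp [funext_iff]

theorem mem_perpSub [Fintype S] {V : Submodule ℝ (S → ℝ)} {y : S → ℝ} :
    y ∈ perpSub V ↔ ∀ x ∈ V, ∑ e, x e * y e = 0 :=
  Iff.rfl

theorem perpSub_ker_funLeft_val [Fintype S] (B : Set S) :
    perpSub (LinearMap.ker (LinearMap.funLeft ℝ ℝ ((↑) : B → S))) =
      LinearMap.ker (LinearMap.funLeft ℝ ℝ ((↑) : ↥Bᶜ → S)) := by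
  classical
  ext y
  simp only [mem_perpSub, mem_ker_funLeft_val]
  refine ⟨fun hy e he => ?_, fun hy x hx => Finset.sum_eq_zero fun e _ => ?_⟩
  · have hsingle : ∀ f ∈ B, (Pi.single e 1 : S → ℝ) f = 0 := fun f hf =>
      Pi.single_eq_of_ne (ne_of_mem_of_not_mem hf he) 1
    simpa [Pi.single_apply] using hy (Pi.single e 1) hsingle
  · by_cases he : e ∈ B
    · rw [hx e he, zero_mul]
    · rw [hy e he, mul_zero]

theorem comap_perpSub [Fintype S] (V : Submodule ℝ (S → ℝ)) :
    (perpSub V).comap (WithLp.linearEquiv 2 ℝ (S → ℝ)).toLinearMap =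
      (V.comap (WithLp.linearEquiv 2 ℝ (S → ℝ)).toLinearMap)ᗮ := by
  ext y
  refine ⟨fun hy x hx => ?_, fun hy x hx => ?_⟩
  · simpa [PiLp.inner_apply, mul_comm] using hy x.ofLp hx
  · simpa [PiLp.inner_apply, mul_comm] using hy (WithLp.toLp 2 x) hx

theorem IsCompl.perpSub [Fintype S] {U W : Submodule ℝ (S → ℝ)} (h : IsCompl U W) :
    IsCompl (perpSub U) (perpSub W) := by
  rw [(Submodule.orderIsoMapComap (WithLp.linearEquiv 2 ℝ (S → ℝ))).symm.isCompl_iff] at h ⊢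
  simp only [Submodule.orderIsoMapComap_symm_apply, comap_perpSub] at h ⊢
  exact h.orthogonal

theorem IsBase.compl_perpSub [Fintype S] {V : Submodule ℝ (S → ℝ)} {B : Set S} (h : IsBase V B) :
    IsBase (perpSub V) Bᶜ := by
  rw [isBase_iff_isCompl_ker] at h ⊢
  rw [← perpSub_ker_funLeft_val]
  exact h.perpSub

end

/-- `B` is a base of `V` iff its complement `S \ B` is a base of `V^⊥`:
the matroid of `V^⊥` is the dual of the matroid of `V`. -/
theorem isBase_iff_compl_isBase_perp
    {S : Type*} [Fintype S] (V : Submodule ℝ (S → ℝ)) (B : Set S) :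
    IsBase V B ↔ IsBase (perpSub V) Bᶜ :=
  ⟨IsBase.compl_perpSub, fun h => by simpa only [perpSub_perpSub, compl_compl] using h.compl_perpSub⟩
end
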